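/- Let B ⊂ X be a ball, σ ≥ 1, and w a nonnegative locally integrable function. Assume there exists 0 < ε < 1 such that ∫_B (w − w_{σB})₊ dμ ≤ ε w(σB). Then for every λ with ε < λ < 1 one has w(B ∩ {x : (1 − ε/λ) w(x) ≥ w_{σB}}) ≤ λ w(σB). -/

import Mathlib

open MeasureTheory Metric Set

variable {X : Type*}

/-- Integral average of `f` over `A` with respect to `μ`. -/
noncomputable def avgOn [MeasurableSpace X] (μ : Measure X) (f : X → ℝ) (A : Set X) : ℝ :=
  (∫ x in A, f x ∂μ) / (μ A).toReal

/-- `μ` is a doubling measure with doubling constant `Cμ > 1`. -/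
def IsDoubling [PseudoMetricSpace X] [MeasurableSpace X] (μ : Measure X) (Cμ : ℝ) : Prop :=
  1 < Cμ ∧ ∀ (x : X) (r : ℝ), 0 < r →
    0 < μ (ball x r) ∧ μ (ball x (2 * r)) ≤ ENNReal.ofReal Cμ * μ (ball x r) ∧
      μ (ball x r) < ⊤

/-! On `E = B ∩ {(1 - ε/λ) w ≥ w_{σB}}` one has `(ε/λ) w ≤ w - w_{σB} ≤ (w - w_{σB})₊`, hence
`(ε/λ) w(E) ≤ ∫_B (w - w_{σB})₊ ≤ ε w(σB)`. -/

lemma Metric.ball_subset_ball_mul_left [PseudoMetricSpace X] (x : X) (r : ℝ) {σ : ℝ}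
    (hσ : 1 ≤ σ) : ball x r ⊆ ball x (σ * r) := by
  rcases le_or_gt r 0 with hr | hr
  · simp [ball_eq_empty.2 hr]
  · exact ball_subset_ball (by nlinarith)

lemma avgOn_nonneg [MeasurableSpace X] (μ : Measure X) {f : X → ℝ} (hf : ∀ x, 0 ≤ f x)
    (A : Set X) : 0 ≤ avgOn μ f A :=
  div_nonneg (integral_nonneg hf) ENNReal.toReal_nonneg

lemma mul_setIntegral_le_integral_posPart {α : Type*} [MeasurableSpace α] {ν : Measure α}
    {f : α → ℝ} (hf : Integrable f ν) {c : ℝ} (hc : 0 ≤ c) (t : ℝ) :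
    t * ∫ x in {x | c ≤ (1 - t) * f x}, f x ∂ν ≤ ∫ x, max (f x - c) 0 ∂ν := by
  have hlevel : NullMeasurableSet {x | c ≤ (1 - t) * f x} ν :=
    aestronglyMeasurable_const.nullMeasurableSet_le (hf.1.const_mul _)
  have hpos : Integrable (fun x => max (f x - c) 0) ν := by
    refine hf.norm.mono' ((hf.1.sub aestronglyMeasurable_const).sup aestronglyMeasurable_const)
      (ae_of_all _ fun x => ?_)
    rw [Real.norm_eq_abs, abs_of_nonneg (le_max_right _ _)]
    exact max_le (by linarith [Real.le_norm_self (f x)]) (abs_nonneg _)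
  calc t * ∫ x in {x | c ≤ (1 - t) * f x}, f x ∂ν
      = ∫ x in {x | c ≤ (1 - t) * f x}, t * f x ∂ν := (integral_const_mul _ _).symm
    _ ≤ ∫ x in {x | c ≤ (1 - t) * f x}, max (f x - c) 0 ∂ν :=
        setIntegral_mono_on₀ (hf.integrableOn.const_mul t) hpos.integrableOn hlevel
          fun x (hx : c ≤ (1 - t) * f x) => by linarith [le_max_left (f x - c) 0]
    _ ≤ ∫ x, max (f x - c) 0 ∂ν :=
        setIntegral_le_integral hpos (ae_of_all _ fun x => le_max_right _ _)

theorem weakGR_implies_weakAinf_general [MetricSpace X] [MeasurableSpace X]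
    (μ : Measure X)
    (w : X → ℝ) (hw : ∀ x, 0 ≤ w x)
    (x₀ : X) (r : ℝ) (σ : ℝ) (hσ : 1 ≤ σ)
    (ε : ℝ) (hε0 : 0 < ε)
    (hGR : ∫ x in ball x₀ r, max (w x - avgOn μ w (ball x₀ (σ * r))) 0 ∂μ ≤
      ε * ∫ x in ball x₀ (σ * r), w x ∂μ)
    (lam : ℝ) (hl1 : ε < lam) :
    ∫ x in ball x₀ r ∩ {x | avgOn μ w (ball x₀ (σ * r)) ≤ (1 - ε / lam) * w x}, w x ∂μ ≤
      lam * ∫ x in ball x₀ (σ * r), w x ∂μ := by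
  set c := avgOn μ w (ball x₀ (σ * r))
  have hc : 0 ≤ c := avgOn_nonneg μ hw _
  have hlam : 0 < lam := hε0.trans hl1
  by_cases hint : IntegrableOn w (ball x₀ r) μ
  · have hlevel : NullMeasurableSet {x | c ≤ (1 - ε / lam) * w x} (μ.restrict (ball x₀ r)) :=
      aestronglyMeasurable_const.nullMeasurableSet_le (hint.1.const_mul _)
    have key := (mul_setIntegral_le_integral_posPart hint hc (ε / lam)).trans hGR
    rw [Measure.restrict_restrict₀ hlevel, inter_comm, div_mul_eq_mul_div,
      div_le_iff₀ hlam] at key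
    exact le_of_mul_le_mul_left (by linarith) hε0
  · -- Then `w` is not integrable on `σB` either: the average `c` and both sides are the junk `0`.
    have hbig : ∫ x in ball x₀ (σ * r), w x ∂μ = 0 :=
      integral_undef fun h => hint (IntegrableOn.mono_set h (ball_subset_ball_mul_left x₀ r hσ))
    have hlevel : {x | c ≤ (1 - ε / lam) * w x} = univ := by
      have hc0 : c = 0 := by simp only [c, avgOn, hbig, zero_div]
      have ht : 0 ≤ 1 - ε / lam := by rw [sub_nonneg, div_le_one hlam]; exact hl1.le
      exact eq_univ_of_forall fun x => hc0 ▸ mul_nonneg ht (hw x)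
    rw [hlevel, inter_univ, integral_undef hint, hbig, mul_zero]

/-- If `∫_B (w − w_{σB})₊ dμ ≤ ε w(σB)` with `0 < ε < 1`, then for every `ε < λ < 1`,
`w(B ∩ {(1 − ε/λ) w ≥ w_{σB}}) ≤ λ w(σB)`. -/
theorem weakGR_implies_weakAinf [MetricSpace X] [MeasurableSpace X] [BorelSpace X]
    (μ : Measure X) (Cμ : ℝ) (hμ : IsDoubling μ Cμ)
    (w : X → ℝ) (hw : ∀ x, 0 ≤ w x) (hloc : LocallyIntegrable w μ)
    (x₀ : X) (r : ℝ) (hr : 0 < r) (σ : ℝ) (hσ : 1 ≤ σ)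
    (ε : ℝ) (hε0 : 0 < ε) (hε1 : ε < 1)
    (hGR : ∫ x in ball x₀ r, max (w x - avgOn μ w (ball x₀ (σ * r))) 0 ∂μ ≤
      ε * ∫ x in ball x₀ (σ * r), w x ∂μ)
    (lam : ℝ) (hl1 : ε < lam) (hl2 : lam < 1) :
    ∫ x in ball x₀ r ∩ {x | avgOn μ w (ball x₀ (σ * r)) ≤ (1 - ε / lam) * w x}, w x ∂μ ≤
      lam * ∫ x in ball x₀ (σ * r), w x ∂μ :=
  weakGR_implies_weakAinf_general μ w hw x₀ r σ hσ ε hε0 hGR lam hl1
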